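/- arXiv:2504.13366 — 5 statements merged into one kernel-verified Lean document; each statement's English description precedes it below -/
import Mathlib

section
/- Let S be a symmetric numerical semigroup with multiplicity m := min(S \ {0}) and delta invariant δ. Suppose ℓ' is an integer with ℓ' ≤ δ and ℓ' ≥ m. If #(S ∩ [ℓ'−m, ℓ'−1]) > m/2, then a contradiction follows; in other words, for any ℓ' ≤ δ with ℓ' ≥ m one has #(S ∩ [ℓ'−m, ℓ'−1]) ≤ m/2. -/
/-!
The `m` consecutive integers `ℓ' - m, …, ℓ' - 1` have distinct residues mod `m`, so if more than
half of them lie in `S`, pigeonhole in `ZMod m` writes every residue class as a sum `a + b` of two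
of them. Adding multiples of `m` then puts every `n ≥ 2ℓ' - 2` in `S`, so the conductor is at most
`2ℓ' - 2 < 2δ`, whereas symmetry forces it to be exactly `2δ`.
-/

open Finset

open scoped Classical in
/-- Weight function of a subset `S ⊆ ℕ`:
`w0 S ℓ = #([0,ℓ) ∩ S) − #([0,ℓ) \ S)`. -/
noncomputable def w0 (S : Set ℕ) (l : ℕ) : ℤ :=
  (((Finset.range l).filter (fun k => k ∈ S)).card : ℤ) -
    (((Finset.range l).filter (fun k => k ∉ S)).card : ℤ)

theorem Finset.exists_add_eq_of_card_lt_card_add_card {G : Type*} [AddGroup G] [Fintype G]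
    [DecidableEq G] {s t : Finset G} (h : Fintype.card G < #s + #t) (x : G) :
    ∃ a ∈ s, ∃ b ∈ t, a + b = x := by
  have hcard : #(t.image (x - ·)) = #t := card_image_of_injective t (sub_right_injective (b := x))
  obtain ⟨a, ha⟩ := inter_nonempty_of_card_lt_card_add_card (subset_univ s)
    (subset_univ (t.image (x - ·))) (by rwa [card_univ, hcard])
  obtain ⟨has, hat⟩ := mem_inter.mp ha
  obtain ⟨b, hbt, rfl⟩ := mem_image.mp hat
  exact ⟨x - b, has, b, hbt, sub_add_cancel x b⟩

theorem ZMod.natCast_injOn_Ico (k m : ℕ) :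
    Set.InjOn (Nat.cast : ℕ → ZMod m) (Set.Ico k (k + m)) := by
  intro a ha b hb hab
  refine ((ZMod.natCast_eq_natCast_iff a b m).mp hab).eq_of_abs_lt ?_
  rw [Set.mem_Ico] at ha hb
  rw [abs_lt]
  constructor <;> omega

theorem Nat.exists_add_modEq_of_subset_Ico {A : Finset ℕ} {k m : ℕ} (hA : A ⊆ Ico k (k + m))
    (hcard : m < 2 * #A) (n : ℕ) : ∃ a ∈ A, ∃ b ∈ A, a + b ≡ n [MOD m] := by
  have : NeZero m := ⟨by
    rintro rfl
    simp_all [subset_empty]⟩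
  have hinj : #(A.image (Nat.cast : ℕ → ZMod m)) = #A :=
    Finset.card_image_of_injOn <|
      (ZMod.natCast_injOn_Ico k m).mono fun x hx => by simpa using hA hx
  obtain ⟨_, hx, _, hy, hab⟩ :=
    exists_add_eq_of_card_lt_card_add_card (s := A.image Nat.cast) (t := A.image Nat.cast)
      (by rw [ZMod.card, hinj]; omega) (n : ZMod m)
  obtain ⟨a, ha, rfl⟩ := mem_image.mp hx
  obtain ⟨b, hb, rfl⟩ := mem_image.mp hy
  exact ⟨a, ha, b, hb, (ZMod.natCast_eq_natCast_iff _ _ _).mp (by push_cast; exact hab)⟩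

section AddClosed

variable {S : Set ℕ} (hadd : ∀ a b, a ∈ S → b ∈ S → a + b ∈ S) {m : ℕ} (hm : m ∈ S)
include hadd hm

theorem add_mul_mem_of_add_closed {s : ℕ} (hs : s ∈ S) (t : ℕ) : s + m * t ∈ S := by
  induction t with
  | zero => simpa using hs
  | succ t ih => simpa [Nat.mul_succ, ← add_assoc] using hadd _ _ ih hm

theorem mem_of_modEq_of_add_closed {s n : ℕ} (hs : s ∈ S) (hsn : s ≡ n [MOD m]) (hle : s ≤ n) :
    n ∈ S := by
  obtain ⟨t, ht⟩ := (Nat.modEq_iff_dvd' hle).mp hsn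
  simpa [← ht, Nat.add_sub_cancel' hle] using add_mul_mem_of_add_closed hadd hm hs t

end AddClosed

theorem two_mul_ncard_compl_eq_of_symm {S : Set ℕ} {c : ℕ} (hc : ∀ n, c ≤ n → n ∈ S)
    (hsym : ∀ ℓ < c, ℓ ∈ S ↔ (c - 1 - ℓ) ∉ S) : 2 * Sᶜ.ncard = c := by
  classical
  have hgaps : Sᶜ = ↑((range c).filter (· ∉ S)) := by
    ext x
    simp only [Set.mem_compl_iff, coe_filter, mem_range, Set.mem_ofPred_eq]
    exact ⟨fun hx => ⟨by by_contra h; exact hx (hc x (not_lt.mp h)), hx⟩, And.right⟩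
  have hreflect : #((range c).filter (· ∈ S)) = #((range c).filter (· ∉ S)) := by
    refine card_nbij' (c - 1 - ·) (c - 1 - ·) ?_ ?_ ?_ ?_
    · intro a ha
      simp only [coe_filter, mem_range, Set.mem_ofPred_eq] at ha ⊢
      exact ⟨by omega, (hsym a ha.1).mp ha.2⟩
    · intro a ha
      simp only [coe_filter, mem_range, Set.mem_ofPred_eq] at ha ⊢
      refine ⟨by omega, (hsym _ (by omega)).mpr ?_⟩
      rw [Nat.sub_sub_self (by omega)]
      exact ha.2
    all_goals
      intro a ha
      simp only [coe_filter, mem_range, Set.mem_ofPred_eq] at ha ⊢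
      omega
  have htotal := card_filter_add_card_filter_not (s := range c) (· ∈ S)
  rw [hgaps, Set.ncard_coe_finset]
  simp only [card_range] at htotal
  omega

open scoped Classical in
theorem window_count_le_general (S : Set ℕ)
    (hadd : ∀ a b, a ∈ S → b ∈ S → a + b ∈ S)
    (c : ℕ)
    (hc : ∀ n, c ≤ n → n ∈ S)
    (hcmin : ∀ c', (∀ n, c' ≤ n → n ∈ S) → c ≤ c')
    (hsym : ∀ ℓ < c, ℓ ∈ S ↔ (c - 1 - ℓ) ∉ S)
    (δ : ℕ) (hδ : δ = (Sᶜ : Set ℕ).ncard)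
    (m : ℕ) (hm : m ∈ S) (hmpos : 0 < m)
    (ℓ' : ℕ) (hℓ'm : m ≤ ℓ') (hℓ'δ : ℓ' ≤ δ) :
    2 * ((Finset.Icc (ℓ' - m) (ℓ' - 1)).filter (fun k => k ∈ S)).card ≤ m := by
  by_contra! hwindow
  have hconductor : 2 * δ = c := hδ ▸ two_mul_ncard_compl_eq_of_symm hc hsym
  have hwindow_sub : (Icc (ℓ' - m) (ℓ' - 1)).filter (· ∈ S) ⊆ Ico (ℓ' - m) (ℓ' - m + m) := by
    intro a ha
    simp only [mem_filter, mem_Icc, mem_Ico] at ha ⊢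
    omega
  have htail : ∀ n, 2 * ℓ' - 2 ≤ n → n ∈ S := by
    intro n hn
    obtain ⟨a, ha, b, hb, hab⟩ := Nat.exists_add_modEq_of_subset_Ico hwindow_sub hwindow n
    simp only [mem_filter, mem_Icc] at ha hb
    exact mem_of_modEq_of_add_closed hadd hm (hadd a b ha.2 hb.2) hab (by omega)
  have hc_le := hcmin _ htail
  omega

open scoped Classical in
theorem window_count_le (S : Set ℕ) (h0 : 0 ∈ S)
    (hadd : ∀ a b, a ∈ S → b ∈ S → a + b ∈ S)
    (hfin : (Sᶜ : Set ℕ).Finite) (c : ℕ)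
    (hc : ∀ n, c ≤ n → n ∈ S)
    (hcmin : ∀ c', (∀ n, c' ≤ n → n ∈ S) → c ≤ c')
    (hsym : ∀ ℓ < c, ℓ ∈ S ↔ (c - 1 - ℓ) ∉ S)
    (δ : ℕ) (hδ : δ = (Sᶜ : Set ℕ).ncard)
    (m : ℕ) (hm : m ∈ S) (hmpos : 0 < m)
    (hmmin : ∀ k ∈ S, 0 < k → m ≤ k)
    (ℓ' : ℕ) (hℓ'm : m ≤ ℓ') (hℓ'δ : ℓ' ≤ δ) :
    2 * ((Finset.Icc (ℓ' - m) (ℓ' - 1)).filter (fun k => k ∈ S)).card ≤ m :=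
  window_count_le_general S hadd c hc hcmin hsym δ hδ m hm hmpos ℓ' hℓ'm hℓ'δ
end

section
/- Let S be a symmetric numerical semigroup with multiplicity m and delta invariant δ, and let w₀ be its weight function w₀(ℓ) = #([0,ℓ)∩S) − #([0,ℓ)\S). Then for any integer ℓ ≤ δ, max{w₀(x) : ℓ ≤ x ≤ min(ℓ+m−1, δ)} = max{w₀(x) : ℓ ≤ x ≤ δ}. -/
/-!
With `memSign S k = ±1` according as `k ∈ S`, `w0 S` is the sequence of partial sums of `memSign S`,
so `w0 S (x + m) - w0 S x` is the window sum `W x = ∑_{x ≤ k < x + m} memSign S k`.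
Since `S + m ⊆ S`, `W` is nondecreasing; since `k ↦ c - 1 - k` swaps `S` and its complement below
`c`, `W (c - m - x) = -W x`. Hence `W x ≤ 0` whenever `2x + m ≤ c = 2δ`: below `δ` the weight
never increases along steps of `m`, so its maximum on `[ℓ, δ]` is attained in `[ℓ, ℓ + m - 1]`.
-/

open Finset

open scoped Classical in
noncomputable def memSign (S : Set ℕ) (k : ℕ) : ℤ :=
  if k ∈ S then 1 else -1

theorem w0_eq_sum_memSign (S : Set ℕ) (l : ℕ) : w0 S l = ∑ k ∈ range l, memSign S k := by
  classical
  simp only [w0, memSign, sum_ite, sum_const, nsmul_eq_mul, mul_one, mul_neg, sub_eq_add_neg]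

open scoped Classical in
theorem w0_eq_sub_two_mul_card_filter_notMem (S : Set ℕ) (l : ℕ) :
    w0 S l = l - 2 * ((range l).filter fun k => k ∉ S).card := by
  have := card_filter_add_card_filter_not (s := range l) (p := fun k => k ∈ S)
  rw [card_range] at this
  simp only [w0]
  omega

theorem w0_add (S : Set ℕ) (x n : ℕ) :
    w0 S (x + n) = w0 S x + ∑ k ∈ Ico x (x + n), memSign S k := by
  rw [w0_eq_sum_memSign, w0_eq_sum_memSign, sum_range_add_sum_Ico _ (Nat.le_add_right x n)]

section SymmetricSemigroup

variable {S : Set ℕ} {c : ℕ}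

theorem memSign_le_memSign_add {m : ℕ} (hS : ∀ b ∈ S, b + m ∈ S) (k : ℕ) :
    memSign S k ≤ memSign S (k + m) := by
  unfold memSign
  split_ifs with hk hkm <;> first | exact absurd (hS k hk) hkm | norm_num

theorem monotone_sum_Ico_memSign {m : ℕ} (hS : ∀ b ∈ S, b + m ∈ S) :
    Monotone fun x => ∑ k ∈ Ico x (x + m), memSign S k := by
  refine monotone_nat_of_le_succ fun x => ?_
  have hsplit : ∑ k ∈ Ico x (x + m), memSign S k + memSign S (x + m)
      = memSign S x + ∑ k ∈ Ico (x + 1) (x + 1 + m), memSign S k := by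
    rw [← sum_Ico_succ_top (Nat.le_add_right x m), sum_eq_sum_Ico_succ_bot (by omega),
      Nat.add_right_comm]
  have := memSign_le_memSign_add hS x
  linarith

theorem memSign_sub_eq_neg (hsym : ∀ ℓ < c, ℓ ∈ S ↔ (c - 1 - ℓ) ∉ S) {k : ℕ}
    (hk : k < c) : memSign S (c - 1 - k) = -memSign S k := by
  have := hsym k hk
  by_cases hkS : k ∈ S <;> simp_all [memSign]

theorem sum_Ico_memSign_eq_neg_reflect (hsym : ∀ ℓ < c, ℓ ∈ S ↔ (c - 1 - ℓ) ∉ S)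
    {x n : ℕ} (h : x + n ≤ c) :
    ∑ k ∈ Ico x (x + n), memSign S k = -∑ k ∈ Ico (c - (x + n)) (c - x), memSign S k := by
  obtain rfl | hc := Nat.eq_zero_or_pos c
  · obtain ⟨rfl, rfl⟩ : x = 0 ∧ n = 0 := by omega
    rfl
  have hrefl : ∀ k ∈ Ico x (x + n), memSign S k = -memSign S (c - 1 - k) := fun k hk => by
    rw [memSign_sub_eq_neg hsym (by simp at hk; omega), neg_neg]
  rw [sum_congr rfl hrefl, sum_neg_distrib, sum_Ico_reflect _ _ (by omega : x + n ≤ c - 1 + 1),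
    Nat.sub_add_cancel hc]

open scoped Classical in
theorem card_filter_range_notMem_eq_ncard_compl (hc : ∀ n, c ≤ n → n ∈ S) :
    ((range c).filter fun k => k ∉ S).card = (Sᶜ : Set ℕ).ncard := by
  rw [← Set.ncard_coe_finset]
  congr
  ext n
  simp only [coe_filter, mem_range, Set.mem_ofPred_eq, Set.mem_compl_iff, and_iff_right_iff_imp]
  exact fun hn => lt_of_not_ge fun h => hn (hc n h)

theorem conductor_eq_two_mul_ncard_compl (hc : ∀ n, c ≤ n → n ∈ S)
    (hsym : ∀ ℓ < c, ℓ ∈ S ↔ (c - 1 - ℓ) ∉ S) : c = 2 * (Sᶜ : Set ℕ).ncard := by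
  have hsum := sum_Ico_memSign_eq_neg_reflect hsym (x := 0) (n := c) (zero_add c).le
  simp only [zero_add, Nat.sub_self, Nat.sub_zero, ← range_eq_Ico] at hsum
  have hw : w0 S c = 0 := by
    rw [w0_eq_sum_memSign]
    linarith
  rw [w0_eq_sub_two_mul_card_filter_notMem, card_filter_range_notMem_eq_ncard_compl hc] at hw
  omega

theorem w0_add_le {m x : ℕ} (hS : ∀ b ∈ S, b + m ∈ S) (hsym : ∀ ℓ < c, ℓ ∈ S ↔ (c - 1 - ℓ) ∉ S)
    (h : 2 * x + m ≤ c) : w0 S (x + m) ≤ w0 S x := by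
  have hmono := monotone_sum_Ico_memSign hS (show x ≤ c - (x + m) by omega)
  have hrefl := sum_Ico_memSign_eq_neg_reflect hsym (x := x) (n := m) (by omega)
  rw [show c - x = c - (x + m) + m by omega] at hrefl
  rw [w0_add]
  dsimp only at hmono
  linarith

end SymmetricSemigroup

theorem apply_add_mul_le_of_step_le {α : Type*} [Preorder α] {f : ℕ → α} {m N : ℕ}
    (hf : ∀ x, x + m ≤ N → f (x + m) ≤ f x) (x : ℕ) :
    ∀ k, x + m * k ≤ N → f (x + m * k) ≤ f x
  | 0, _ => le_rfl
  | k + 1, hk => by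
    rw [mul_add_one, ← add_assoc] at hk ⊢
    exact (hf _ hk).trans (apply_add_mul_le_of_step_le hf x k (by omega))

theorem max_image_Icc_eq_of_step_le {α : Type*} [LinearOrder α] {f : ℕ → α} {m N : ℕ}
    (hm : 0 < m) (hf : ∀ x, x + m ≤ N → f (x + m) ≤ f x) (ℓ : ℕ) :
    ((Icc ℓ (min (ℓ + m - 1) N)).image f).max = ((Icc ℓ N).image f).max := by
  refine le_antisymm (max_mono (image_subset_image (Icc_subset_Icc_right (min_le_right _ _))))
    (Finset.max_le ?_)
  simp only [mem_image, mem_Icc, forall_exists_index, and_imp]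
  rintro _ x hℓx hxN rfl
  set y := ℓ + (x - ℓ) % m
  have hxy : x = y + m * ((x - ℓ) / m) := by
    have := Nat.mod_add_div (x - ℓ) m
    omega
  have hy : y ≤ min (ℓ + m - 1) N := by
    have := Nat.mod_lt (x - ℓ) hm
    omega
  calc (f x : WithBot α) ≤ f y := by
        rw [WithBot.coe_le_coe, hxy]
        exact apply_add_mul_le_of_step_le hf y _ (hxy ▸ hxN)
    _ ≤ _ := le_max (mem_image_of_mem f (mem_Icc.mpr ⟨Nat.le_add_right ℓ _, hy⟩))

theorem window_lemma_general (S : Set ℕ)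
    (hadd : ∀ a b, a ∈ S → b ∈ S → a + b ∈ S)
    (c : ℕ)
    (hc : ∀ n, c ≤ n → n ∈ S)
    (hsym : ∀ ℓ < c, ℓ ∈ S ↔ (c - 1 - ℓ) ∉ S)
    (δ : ℕ) (hδ : δ = (Sᶜ : Set ℕ).ncard)
    (m : ℕ) (hm : m ∈ S) (hmpos : 0 < m)
    (ℓ : ℕ) :
    ((Finset.Icc ℓ (min (ℓ + m - 1) δ)).image (w0 S)).max =
      ((Finset.Icc ℓ δ).image (w0 S)).max := by
  have hcδ : c = 2 * δ := hδ ▸ conductor_eq_two_mul_ncard_compl hc hsym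
  refine max_image_Icc_eq_of_step_le hmpos (fun x hx => ?_) ℓ
  exact w0_add_le (fun b hb => hadd b m hb hm) hsym (by omega)

theorem window_lemma (S : Set ℕ) (h0 : 0 ∈ S)
    (hadd : ∀ a b, a ∈ S → b ∈ S → a + b ∈ S)
    (hfin : (Sᶜ : Set ℕ).Finite) (c : ℕ)
    (hc : ∀ n, c ≤ n → n ∈ S)
    (hcmin : ∀ c', (∀ n, c' ≤ n → n ∈ S) → c ≤ c')
    (hsym : ∀ ℓ < c, ℓ ∈ S ↔ (c - 1 - ℓ) ∉ S)
    (δ : ℕ) (hδ : δ = (Sᶜ : Set ℕ).ncard)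
    (m : ℕ) (hm : m ∈ S) (hmpos : 0 < m)
    (hmmin : ∀ k ∈ S, 0 < k → m ≤ k)
    (ℓ : ℕ) (hℓ : ℓ ≤ δ) :
    ((Finset.Icc ℓ (min (ℓ + m - 1) δ)).image (w0 S)).max =
      ((Finset.Icc ℓ δ).image (w0 S)).max :=
  window_lemma_general S hadd c hc hsym δ hδ m hm hmpos ℓ
end

section
/- Let β₀ < β₁ < … < β_g be the minimal generators of a numerical semigroup S of an irreducible plane curve singularity, satisfying the plane-branch condition nᵢβᵢ < β_{i+1} for 0 ≤ i ≤ g−1, where lᵢ = gcd(β₀,…,βᵢ) (so l₀ = β₀) and nᵢ = l_{i−1}/lᵢ. Define partial conductors by c₀ = 0 and cᵢ = c_{i−1} + (l_{i−1} − lᵢ)(βᵢ − lᵢ)/lᵢ. Then β_{i+1} > cᵢ for all 0 ≤ i ≤ g−1. -/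
open Finset

theorem generators_gt_partial_conductors
    (g : ℕ) (hg : 1 ≤ g) (β l c : ℕ → ℕ)
    (hβpos : ∀ i, 0 < β i)
    (hl0 : l 0 = β 0)
    (hlrec : ∀ i, l (i + 1) = Nat.gcd (l i) (β (i + 1)))
    (hβ01 : β 0 < β 1)
    (hn : ∀ i, 1 ≤ i → i + 1 ≤ g → l (i - 1) * β i < l i * β (i + 1))
    (hc0 : c 0 = 0)
    (hcrec : ∀ i, 1 ≤ i → i ≤ g →
      l i * c i = l i * c (i - 1) + (l (i - 1) - l i) * (β i - l i)) :
    ∀ i, i + 1 ≤ g → c i < β (i + 1) := by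
  have lpos : ∀ i, 0 < l i := by
    intro i
    induction i with
    | zero => rw [hl0]; exact hβpos 0
    | succ n ih => rw [hlrec n]; exact Nat.gcd_pos_of_pos_right _ (hβpos (n + 1))
  have lle : ∀ i, l (i + 1) ≤ l i := by
    intro i
    rw [hlrec i]
    exact Nat.le_of_dvd (lpos i) (Nat.gcd_dvd_left _ _)
  intro i
  induction i with
  | zero => intro _; rw [hc0]; exact hβpos 1
  | succ j ih =>
    intro hle
    have hj : j + 1 ≤ g := by omega
    have hcj : c j < β (j + 1) := ih hj
    set i := j + 1 with hi
    have hrec := hcrec i (by omega) (by omega)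
    simp only [hi, Nat.add_sub_cancel] at hrec
    have h1 : l (j + 1) * c j < l (j + 1) * β (j + 1) :=
      (Nat.mul_lt_mul_left (lpos (j + 1))).mpr hcj
    have h2 : (l j - l (j + 1)) * (β (j + 1) - l (j + 1)) ≤ (l j - l (j + 1)) * β (j + 1) :=
      Nat.mul_le_mul_left _ (Nat.sub_le _ _)
    have h3 : l (j + 1) * β (j + 1) + (l j - l (j + 1)) * β (j + 1) = l j * β (j + 1) := by
      rw [← Nat.add_mul]
      congr 1
      have := lle j
      omega
    have h4 : l j * β (j + 1) < l (j + 1) * β (j + 2) := hn (j + 1) (by omega) (by omega)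
    have : l (j + 1) * c (j + 1) < l (j + 1) * β (j + 2) := by
      rw [hrec]
      calc l (j + 1) * c j + (l j - l (j + 1)) * (β (j + 1) - l (j + 1))
          < l (j + 1) * β (j + 1) + (l j - l (j + 1)) * β (j + 1) :=
            Nat.add_lt_add_of_lt_of_le h1 h2
        _ = l j * β (j + 1) := h3
        _ < l (j + 1) * β (j + 2) := h4
    exact Nat.lt_of_mul_lt_mul_left this
end

section
/- Let S be the value semigroup of an irreducible plane curve singularity with minimal generators β₀,…,β_g satisfying n_iβ_i < β_{i+1}. Then there are no two consecutive integers both belonging to S in the interval [0, β_g − 1]; i.e., if ℓ, ℓ+1 ∈ S and ℓ+1 ≤ β_g − 1, we get a contradiction. -/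
open Finset

def Nat.multiplesOrGE (d b : ℕ) : AddSubmonoid ℕ where
  carrier := {m | d ∣ m ∨ b ≤ m}
  zero_mem' := Or.inl (dvd_zero d)
  add_mem' := by
    rintro m n (hm | hm) (hn | hn)
    · exact Or.inl (dvd_add hm hn)
    all_goals exact Or.inr (by omega)

theorem Nat.dvd_or_le_of_mem_closure {s : Set ℕ} {d b : ℕ} (hs : ∀ n ∈ s, d ∣ n ∨ b ≤ n)
    {m : ℕ} (hm : m ∈ AddSubmonoid.closure s) : d ∣ m ∨ b ≤ m :=
  AddSubmonoid.closure_le (S := Nat.multiplesOrGE d b) |>.mpr hs hm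

theorem dvd_of_le_of_gcd_succ {β l : ℕ → ℕ} (hl0 : l 0 = β 0)
    (hlrec : ∀ i, l (i + 1) = Nat.gcd (l i) (β (i + 1))) {i k : ℕ} (hk : k ≤ i) :
    l i ∣ β k := by
  induction i generalizing k with
  | zero => rw [Nat.le_zero.mp hk, hl0]
  | succ i ih =>
    rw [hlrec]
    rcases Nat.of_le_succ hk with hk | rfl
    · exact (Nat.gcd_dvd_left _ _).trans (ih hk)
    · exact Nat.gcd_dvd_right _ _

theorem no_consecutive_below_beta_g_general (S : Set ℕ)
    (g : ℕ) (β l : ℕ → ℕ)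
    (hgen : S = (AddSubmonoid.closure {n : ℕ | ∃ i ≤ g, β i = n} : AddSubmonoid ℕ))
    (hl0 : l 0 = β 0)
    (hlrec : ∀ i, l (i + 1) = Nat.gcd (l i) (β (i + 1)))
    (hl2 : 2 ≤ l (g - 1)) :
    ∀ ℓ : ℕ, ℓ ∈ S → ℓ + 1 ∈ S → ℓ + 1 ≤ β g - 1 → False := by
  intro ℓ hℓ hℓ1 hle
  have hgens : ∀ n ∈ {n : ℕ | ∃ i ≤ g, β i = n}, l (g - 1) ∣ n ∨ β g ≤ n := by
    rintro _ ⟨i, hi, rfl⟩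
    rcases hi.lt_or_eq with hi | rfl
    · exact Or.inl (dvd_of_le_of_gcd_succ hl0 hlrec (Nat.le_sub_one_of_lt hi))
    · exact Or.inr le_rfl
  subst hgen
  rcases Nat.dvd_or_le_of_mem_closure hgens hℓ with h | h <;>
    rcases Nat.dvd_or_le_of_mem_closure hgens hℓ1 with h1 | h1
  · have := Nat.le_of_dvd one_pos ((Nat.dvd_add_right h).mp h1)
    omega
  all_goals omega

theorem no_consecutive_below_beta_g (S : Set ℕ) (h0 : 0 ∈ S)
    (hadd : ∀ a b, a ∈ S → b ∈ S → a + b ∈ S)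
    (hfin : (Sᶜ : Set ℕ).Finite)
    (g : ℕ) (hg : 1 ≤ g) (β l : ℕ → ℕ)
    (hβpos : ∀ i, 0 < β i)
    (hβmono : ∀ i j, i < j → j ≤ g → β i < β j)
    (hgen : S = (AddSubmonoid.closure {n : ℕ | ∃ i ≤ g, β i = n} : AddSubmonoid ℕ))
    (hl0 : l 0 = β 0)
    (hlrec : ∀ i, l (i + 1) = Nat.gcd (l i) (β (i + 1)))
    (hn : ∀ i, 1 ≤ i → i + 1 ≤ g → l (i - 1) * β i < l i * β (i + 1))
    (hl2 : 2 ≤ l (g - 1)) :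
    ∀ ℓ : ℕ, ℓ ∈ S → ℓ + 1 ∈ S → ℓ + 1 ≤ β g - 1 → False :=
  no_consecutive_below_beta_g_general S g β l hgen hl0 hlrec hl2
end

section
/- Let S be a symmetric numerical semigroup with multiplicity m ≥ 3, conductor c, delta invariant δ = c/2, and weight function w₀. Then the sublevel set {ℓ ∈ [0,c] ∩ ℤ : w₀(ℓ) ≤ 0} equals {0} ∪ ([2, c−2] ∩ ℤ) ∪ {c}. -/
/-!
Write `F = c - 1`; since `F ∉ S`, no element of `S` is `F - a - s` with `a, s ∈ S`. Hence
`s ↦ l - 1 - s` maps `S ∩ [0, l)` injectively into the gaps below `l` when `c - l ∈ S`, and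
`s ↦ l - s` (sending `0` to `l - y`) does so when `c - 1 - l ∈ S` and `y`, `l - y` are gaps for
some `0 < y < l`; either way `w0 S l ≤ 0`.

The reflection `k ↦ c - 1 - k` swaps elements and gaps below `c`, so `w0 S (c - l) = w0 S l`
and one may assume `2 l ≤ c`. If `l ∈ S` the first case applies to `c - l`. If `l ∉ S` then
`c - 1 - l ∈ S`, and a gap pair `y`, `l - y` exists: otherwise `l - 1, …, l - m + 1 ∈ S`, their
pairwise sums fill `[2 (l - m + 1), 2 l - 2]`, which has at least `m` elements because `m ≥ 3`,
so the conductor would be at most `2 l - 2 m + 2 < c`. At the ends, `w0 S 0 = w0 S c = 0` and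
`w0 S 1 = w0 S (c - 1) = 1`.
-/

open Finset

open scoped Classical

@[simp]
lemma w0_zero (S : Set ℕ) : w0 S 0 = 0 := by
  simp [w0]

lemma w0_eq_sum (S : Set ℕ) (l : ℕ) :
    w0 S l = ∑ k ∈ range l, if k ∈ S then (1 : ℤ) else -1 := by
  simp [w0, Finset.sum_ite, sub_eq_add_neg]

section

variable {S : Set ℕ}

lemma w0_nonpos_of_injOn {l : ℕ} (f : ℕ → ℕ)
    (hf : Set.MapsTo f (S ∩ Set.Iio l) (Sᶜ ∩ Set.Iio l)) (hinj : Set.InjOn f (S ∩ Set.Iio l)) :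
    w0 S l ≤ 0 := by
  have hmem : (((range l).filter (· ∈ S) : Finset ℕ) : Set ℕ) = S ∩ Set.Iio l := by
    ext; simp [and_comm]
  have hgap : (((range l).filter (· ∉ S) : Finset ℕ) : Set ℕ) = Sᶜ ∩ Set.Iio l := by
    ext; simp [and_comm]
  have := card_le_card_of_injOn f (hmem ▸ hgap ▸ hf) (hmem ▸ hinj)
  unfold w0
  omega

lemma w0_nonpos_of_mem_of_add_eq_succ (hadd : ∀ a b, a ∈ S → b ∈ S → a + b ∈ S) {F a l : ℕ}
    (hF : F ∉ S) (ha : a ∈ S) (hal : a + l = F + 1) : w0 S l ≤ 0 := by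
  refine w0_nonpos_of_injOn (fun s => l - 1 - s) ?_ ?_
  · rintro s ⟨hs, hsl⟩
    simp only [Set.mem_Iio] at hsl
    refine ⟨fun ht => hF ?_, by simp only [Set.mem_Iio]; omega⟩
    have := hadd _ _ (hadd _ _ ha hs) ht
    rwa [show a + s + (l - 1 - s) = F by omega] at this
  · rintro s ⟨-, hs⟩ t ⟨-, ht⟩ h
    simp only [Set.mem_Iio] at hs ht h
    omega

lemma w0_nonpos_of_mem_of_add_eq_of_gap_pair (hadd : ∀ a b, a ∈ S → b ∈ S → a + b ∈ S)
    {F a l y : ℕ} (hF : F ∉ S) (ha : a ∈ S) (hal : a + l = F)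
    (hy0 : 0 < y) (hyl : y < l) (hy : y ∉ S) (hly : l - y ∉ S) : w0 S l ≤ 0 := by
  refine w0_nonpos_of_injOn (fun s => if s = 0 then l - y else l - s) ?_ ?_
  · rintro s ⟨hs, hsl⟩
    simp only [Set.mem_Iio] at hsl
    dsimp only
    split_ifs with hs0
    · exact ⟨hly, by simp only [Set.mem_Iio]; omega⟩
    · refine ⟨fun ht => hF ?_, by simp only [Set.mem_Iio]; omega⟩
      have := hadd _ _ (hadd _ _ ha hs) ht
      rwa [show a + s + (l - s) = F by omega] at this
  · rintro s ⟨hs, hsl⟩ t ⟨ht, htl⟩ h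
    simp only [Set.mem_Iio] at hsl htl
    by_cases hs0 : s = 0 <;> by_cases ht0 : t = 0 <;> simp only [hs0, ht0, if_true, if_false] at h
    · omega
    · exact absurd (show t = y by omega ▸ ht) hy
    · exact absurd (show s = y by omega ▸ hs) hy
    · omega

lemma w0_sub_eq_of_symm {c : ℕ} (hsym : ∀ ℓ < c, ℓ ∈ S ↔ c - 1 - ℓ ∉ S) {l : ℕ} (hl : l ≤ c) :
    w0 S (c - l) = w0 S l := by
  rcases Nat.eq_zero_or_pos c with rfl | hc
  · rw [Nat.le_zero.mp hl]
  have hreflect : ∀ l ≤ c, ∑ k ∈ Ico (c - l) c, (if k ∈ S then (1 : ℤ) else -1) = -w0 S l := by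
    intro l hl
    rw [w0_eq_sum, ← Finset.sum_neg_distrib, range_eq_Ico]
    have := sum_Ico_reflect (fun k => if k ∈ S then (1 : ℤ) else -1) 0 (show l ≤ c - 1 + 1 by omega)
    rw [show c - 1 + 1 = c by omega, Nat.sub_zero] at this
    rw [← this]
    refine sum_congr rfl fun k hk => ?_
    have hk : k < c := by simp only [mem_Ico] at hk; omega
    have := hsym k hk
    by_cases hkS : k ∈ S <;> by_cases hk' : c - 1 - k ∈ S <;> simp_all
  have hsplit : ∀ l ≤ c, w0 S c = w0 S (c - l) - w0 S l := by
    intro l hl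
    rw [w0_eq_sum S c, w0_eq_sum S (c - l), ← sum_range_add_sum_Ico _ (Nat.sub_le c l),
      hreflect l hl]
    ring
  have hc0 : w0 S c = 0 := by
    have := hsplit c le_rfl
    rw [Nat.sub_self, w0_zero] at this
    linarith
  linarith [hsplit l hl]

lemma Ici_subset_of_Ico_subset (hadd : ∀ a b, a ∈ S → b ∈ S → a + b ∈ S) {m a : ℕ}
    (hm : m ∈ S) (hm0 : 0 < m) (hI : Set.Ico a (a + m) ⊆ S) : Set.Ici a ⊆ S := by
  intro n hn
  induction n using Nat.strong_induction_on with
  | _ n ih =>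
    by_cases hnm : n < a + m
    · exact hI ⟨hn, hnm⟩
    · simpa [show n - m + m = n by omega] using
        hadd _ _ (ih (n - m) (by omega) (by simp only [Set.mem_Ici] at hn ⊢; omega)) hm

lemma Icc_two_mul_subset (hadd : ∀ a b, a ∈ S → b ∈ S → a + b ∈ S) {a b : ℕ}
    (hI : Set.Icc a b ⊆ S) : Set.Icc (2 * a) (2 * b) ⊆ S := by
  rintro n ⟨han, hnb⟩
  have := hadd _ _ (hI (⟨by omega, by omega⟩ : min b (n - a) ∈ Set.Icc a b))
    (hI (⟨by omega, by omega⟩ : n - min b (n - a) ∈ Set.Icc a b))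
  rwa [show min b (n - a) + (n - min b (n - a)) = n by omega] at this

lemma exists_gap_pair {c m l : ℕ} (hadd : ∀ a b, a ∈ S → b ∈ S → a + b ∈ S)
    (hcmin : ∀ c', (∀ n, c' ≤ n → n ∈ S) → c ≤ c') (hm : m ∈ S) (hm3 : 3 ≤ m)
    (hmmin : ∀ k ∈ S, 0 < k → m ≤ k) (hl : 2 ≤ l) (hlc : 2 * l ≤ c) :
    ∃ y, 0 < y ∧ y < l ∧ y ∉ S ∧ l - y ∉ S := by
  by_contra! hpair
  have hgap : ∀ y, 0 < y → y < m → y ∉ S := fun y hy0 hym hy => by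
    have := hmmin y hy hy0; omega
  have hml : m < l := by
    have := hmmin (l - 1) (hpair 1 one_pos (by omega) (hgap 1 one_pos (by omega))) (by omega)
    omega
  have hrun : Set.Icc (l + 1 - m) (l - 1) ⊆ S := by
    rintro n ⟨h1, h2⟩
    simpa [show l - (l - n) = n by omega] using
      hpair (l - n) (by omega) (by omega) (hgap _ (by omega) (by omega))
  have hrun2 := Icc_two_mul_subset hadd hrun
  have htail := Ici_subset_of_Ico_subset hadd hm (by omega) (a := 2 * (l + 1 - m))
    fun n hn => hrun2 ⟨hn.1, by have := hn.2; omega⟩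
  have := hcmin _ fun n hn => htail hn
  omega

lemma w0_nonpos_of_two_mul_le {c m l : ℕ} (h0 : 0 ∈ S) (hadd : ∀ a b, a ∈ S → b ∈ S → a + b ∈ S)
    (hcmin : ∀ c', (∀ n, c' ≤ n → n ∈ S) → c ≤ c') (hsym : ∀ ℓ < c, ℓ ∈ S ↔ c - 1 - ℓ ∉ S)
    (hm : m ∈ S) (hm3 : 3 ≤ m) (hmmin : ∀ k ∈ S, 0 < k → m ≤ k) (hl : 2 ≤ l) (hlc : 2 * l ≤ c) :
    w0 S l ≤ 0 := by
  have hF : c - 1 ∉ S := by simpa using (hsym 0 (by omega)).1 h0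
  by_cases hlS : l ∈ S
  · rw [← w0_sub_eq_of_symm hsym (by omega)]
    exact w0_nonpos_of_mem_of_add_eq_succ hadd hF hlS (by omega)
  · have ha : c - 1 - l ∈ S := by
      by_contra h
      exact hlS ((hsym l (by omega)).2 h)
    obtain ⟨y, hy0, hyl, hy, hly⟩ := exists_gap_pair hadd hcmin hm hm3 hmmin hl hlc
    exact w0_nonpos_of_mem_of_add_eq_of_gap_pair hadd hF ha (by omega) hy0 hyl hy hly

lemma w0_nonpos_of_two_le_of_le_sub_two {c m l : ℕ} (h0 : 0 ∈ S)
    (hadd : ∀ a b, a ∈ S → b ∈ S → a + b ∈ S) (hcmin : ∀ c', (∀ n, c' ≤ n → n ∈ S) → c ≤ c')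
    (hsym : ∀ ℓ < c, ℓ ∈ S ↔ c - 1 - ℓ ∉ S) (hm : m ∈ S) (hm3 : 3 ≤ m)
    (hmmin : ∀ k ∈ S, 0 < k → m ≤ k) (hl : 2 ≤ l) (hlc : l ≤ c - 2) : w0 S l ≤ 0 := by
  rcases le_total (2 * l) c with h | h
  · exact w0_nonpos_of_two_mul_le h0 hadd hcmin hsym hm hm3 hmmin hl h
  · rw [← w0_sub_eq_of_symm hsym (by omega)]
    exact w0_nonpos_of_two_mul_le h0 hadd hcmin hsym hm hm3 hmmin (by omega) (by omega)

end

theorem sublevel_zero_description_general (S : Set ℕ) (h0 : 0 ∈ S)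
    (hadd : ∀ a b, a ∈ S → b ∈ S → a + b ∈ S)
    (c : ℕ)
    (hc : ∀ n, c ≤ n → n ∈ S)
    (hcmin : ∀ c', (∀ n, c' ≤ n → n ∈ S) → c ≤ c')
    (hsym : ∀ ℓ < c, ℓ ∈ S ↔ (c - 1 - ℓ) ∉ S)
    (m : ℕ) (hm : m ∈ S) (hm3 : 3 ≤ m)
    (hmmin : ∀ k ∈ S, 0 < k → m ≤ k) :
    {ℓ : ℕ | ℓ ≤ c ∧ w0 S ℓ ≤ 0} = {0} ∪ Set.Icc 2 (c - 2) ∪ {c} := by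
  have h1 : 1 ∉ S := fun h => by have := hmmin 1 h one_pos; omega
  have hc2 : 2 ≤ c := by
    by_contra
    exact h1 (hc 1 (by omega))
  have hw1 : w0 S 1 = 1 := by simp [w0_eq_sum, h0]
  have hwc : w0 S c = 0 := by simpa using (w0_sub_eq_of_symm hsym le_rfl).symm
  have hwc1 : w0 S (c - 1) = 1 := (w0_sub_eq_of_symm hsym (by omega)).trans hw1
  ext l
  simp only [Set.mem_ofPred_eq, Set.mem_union, Set.mem_singleton_iff, Set.mem_Icc]
  constructor
  · rintro ⟨hlc, hw⟩
    have : l ≠ 1 := by rintro rfl; omega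
    have : l ≠ c - 1 := by rintro rfl; omega
    omega
  · rintro ((rfl | ⟨hl, hlc⟩) | rfl)
    · simp
    · exact ⟨by omega, w0_nonpos_of_two_le_of_le_sub_two h0 hadd hcmin hsym hm hm3 hmmin hl hlc⟩
    · exact ⟨le_rfl, hwc.le⟩

theorem sublevel_zero_description (S : Set ℕ) (h0 : 0 ∈ S)
    (hadd : ∀ a b, a ∈ S → b ∈ S → a + b ∈ S)
    (hfin : (Sᶜ : Set ℕ).Finite) (c : ℕ)
    (hc : ∀ n, c ≤ n → n ∈ S)
    (hcmin : ∀ c', (∀ n, c' ≤ n → n ∈ S) → c ≤ c')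
    (hsym : ∀ ℓ < c, ℓ ∈ S ↔ (c - 1 - ℓ) ∉ S)
    (m : ℕ) (hm : m ∈ S) (hm3 : 3 ≤ m)
    (hmmin : ∀ k ∈ S, 0 < k → m ≤ k) :
    {ℓ : ℕ | ℓ ≤ c ∧ w0 S ℓ ≤ 0} = {0} ∪ Set.Icc 2 (c - 2) ∪ {c} :=
  sublevel_zero_description_general S h0 hadd c hc hcmin hsym m hm hm3 hmmin
end
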